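/- Key decomposition identity for the continuous homotopy operator: for every f ∈ R = MvPolynomial ℕ ℝ of order at most M, one has X₀ · (L⁰ f) = M f − D_x (I f), where M is the degree operator and I f is the homotopy integrand. -/

import Mathlib

open MvPolynomial

/-- The total derivative operator `D_x f = Σᵢ X_{i+1} · ∂f/∂Xᵢ` on
`R = ℝ[X₀, X₁, X₂, …]`, where `Xᵢ` represents the `i`-th derivative `u_{ix}`. -/
noncomputable def Dx (f : MvPolynomial ℕ ℝ) : MvPolynomial ℕ ℝ :=
  ∑ i ∈ f.vars, X (i + 1) * pderiv i f

/-- The degree operator `M f = Σᵢ Xᵢ · ∂f/∂Xᵢ`. -/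
noncomputable def degOp (f : MvPolynomial ℕ ℝ) : MvPolynomial ℕ ℝ :=
  ∑ i ∈ f.vars, X i * pderiv i f

/-- The continuous Euler operator (variational derivative)
`L⁰ f = Σ_{k≥0} (−D_x)^k (∂f/∂X_k)`. -/
noncomputable def Euler (f : MvPolynomial ℕ ℝ) : MvPolynomial ℕ ℝ :=
  ∑ k ∈ f.vars, ((fun g => -Dx g)^[k]) (pderiv k f)

/-- The homotopy integrand
`I f = Σ_{i=0}^{M−1} Xᵢ · Σ_{k=i+1}^{M} (−D_x)^{k−i−1} (∂f/∂X_k)`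
for `f` of order at most `M`. -/
noncomputable def integrand (M : ℕ) (f : MvPolynomial ℕ ℝ) : MvPolynomial ℕ ℝ :=
  ∑ i ∈ Finset.range M,
    X i * ∑ k ∈ Finset.Icc (i + 1) M, ((fun g => -Dx g)^[k - (i + 1)]) (pderiv k f)

/-! ### Auxiliary lemmas -/

lemma Dx_eq_sum (f : MvPolynomial ℕ ℝ) {s : Finset ℕ} (h : f.vars ⊆ s) :
    Dx f = ∑ i ∈ s, X (i + 1) * pderiv i f :=
  Finset.sum_subset h (fun i _ hi => by
    rw [pderiv_eq_zero_of_notMem_vars hi, mul_zero])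

lemma Dx_zero : Dx (0 : MvPolynomial ℕ ℝ) = 0 := by
  simp [Dx, vars_0]

lemma Dx_add (p q : MvPolynomial ℕ ℝ) : Dx (p + q) = Dx p + Dx q := by
  classical
  rw [Dx_eq_sum (p + q) (vars_add_subset p q),
    Dx_eq_sum p Finset.subset_union_left, Dx_eq_sum q Finset.subset_union_right,
    ← Finset.sum_add_distrib]
  simp [mul_add]

lemma Dx_sum {α : Type*} (s : Finset α) (g : α → MvPolynomial ℕ ℝ) :
    Dx (∑ i ∈ s, g i) = ∑ i ∈ s, Dx (g i) := by
  classical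
  induction s using Finset.induction_on with
  | empty => simp [Dx_zero]
  | @insert _ _ h ih => rw [Finset.sum_insert h, Finset.sum_insert h, Dx_add, ih]

lemma Dx_mul (p q : MvPolynomial ℕ ℝ) : Dx (p * q) = Dx p * q + p * Dx q := by
  classical
  rw [Dx_eq_sum (p * q) (vars_mul p q),
    Dx_eq_sum p Finset.subset_union_left, Dx_eq_sum q Finset.subset_union_right,
    Finset.sum_mul, Finset.mul_sum, ← Finset.sum_add_distrib]
  refine Finset.sum_congr rfl fun i _ => ?_
  rw [pderiv_mul]
  ring

lemma Dx_X (i : ℕ) : Dx (X i : MvPolynomial ℕ ℝ) = X (i + 1) := by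
  rw [Dx, vars_X]
  simp [pderiv_X_self]

lemma iter_zero (k : ℕ) : ((fun g : MvPolynomial ℕ ℝ => -Dx g)^[k]) 0 = 0 :=
  Function.iterate_fixed (by simp [Dx_zero]) k

/-- `S i = Σ_{j < M - i} (−D_x)^j (∂f/∂X_{i+1+j})`, the inner sum of the homotopy
integrand, reindexed over a `range`. -/
noncomputable def Sfun (M : ℕ) (f : MvPolynomial ℕ ℝ) (i : ℕ) : MvPolynomial ℕ ℝ :=
  ∑ j ∈ Finset.range (M - i), ((fun g => -Dx g)^[j]) (pderiv (i + 1 + j) f)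

lemma Icc_sum_eq (M : ℕ) (f : MvPolynomial ℕ ℝ) (i : ℕ) :
    ∑ k ∈ Finset.Icc (i + 1) M, ((fun g => -Dx g)^[k - (i + 1)]) (pderiv k f)
      = Sfun M f i := by
  rw [← Finset.Ico_add_one_right_eq_Icc, Finset.sum_Ico_eq_sum_range]
  simp only [Sfun]
  have hc : M + 1 - (i + 1) = M - i := by omega
  rw [hc]
  refine Finset.sum_congr rfl fun j _ => ?_
  have e : i + 1 + j - (i + 1) = j := by omega
  rw [e]

lemma Sfun_top (M : ℕ) (f : MvPolynomial ℕ ℝ) : Sfun M f M = 0 := by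
  simp [Sfun]

lemma Sfun_rec (M : ℕ) (f : MvPolynomial ℕ ℝ) (i : ℕ) (h : i < M) :
    Sfun M f i = pderiv (i + 1) f - Dx (Sfun M f (i + 1)) := by
  have hMi : M - i = (M - (i + 1)) + 1 := by omega
  rw [Sfun, hMi, Finset.sum_range_succ']
  have h1 : ∀ j, ((fun g : MvPolynomial ℕ ℝ => -Dx g)^[j + 1]) (pderiv (i + 1 + (j + 1)) f)
      = -Dx (((fun g : MvPolynomial ℕ ℝ => -Dx g)^[j]) (pderiv (i + 1 + 1 + j) f)) := by
    intro j
    rw [Function.iterate_succ_apply']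
    have e : i + 1 + (j + 1) = i + 1 + 1 + j := by omega
    rw [e]
  simp only [h1, Function.iterate_zero, id, add_zero]
  rw [Finset.sum_neg_distrib, ← Dx_sum]
  rw [Sfun]
  ring

lemma telescope (M : ℕ) (f : MvPolynomial ℕ ℝ) :
    ∀ m, m ≤ M →
      ∑ i ∈ Finset.range m, (X (i + 1) * Sfun M f i + X i * Dx (Sfun M f i))
        = X 0 * Dx (Sfun M f 0) + (∑ k ∈ Finset.Icc 1 m, X k * pderiv k f)
            - X m * Dx (Sfun M f m) := by
  intro m
  induction m with
  | zero => intro _; simp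
  | succ m ih =>
    intro hm
    rw [Finset.sum_range_succ, ih (by omega),
      Finset.sum_Icc_succ_top (by omega : 1 ≤ m + 1)]
    have h := Sfun_rec M f m (by omega)
    linear_combination (X (m + 1) : MvPolynomial ℕ ℝ) * h

lemma Euler_eq (M : ℕ) (f : MvPolynomial ℕ ℝ) (hM : ∀ i ∈ f.vars, i ≤ M) :
    Euler f = pderiv 0 f - Dx (Sfun M f 0) := by
  have hsub : f.vars ⊆ Finset.range (M + 1) := fun i hi =>
    Finset.mem_range.mpr (Nat.lt_succ_of_le (hM i hi))
  have h0 : Euler f = ∑ k ∈ Finset.range (M + 1), ((fun g => -Dx g)^[k]) (pderiv k f) := by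
    rw [Euler]
    exact Finset.sum_subset hsub (fun k _ hk => by
      rw [pderiv_eq_zero_of_notMem_vars hk, iter_zero])
  rw [h0, Finset.sum_range_succ']
  simp only [Function.iterate_succ_apply', Function.iterate_zero, id]
  rw [Finset.sum_neg_distrib, ← Dx_sum]
  have hS : Sfun M f 0 = ∑ j ∈ Finset.range M,
      ((fun g : MvPolynomial ℕ ℝ => -Dx g)^[j]) (pderiv (j + 1) f) := by
    simp only [Sfun, Nat.sub_zero]
    refine Finset.sum_congr rfl fun j _ => ?_
    have e : 0 + 1 + j = j + 1 := by omega
    rw [e]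
  rw [← hS]
  ring

lemma degOp_eq (M : ℕ) (f : MvPolynomial ℕ ℝ) (hM : ∀ i ∈ f.vars, i ≤ M) :
    degOp f = X 0 * pderiv 0 f + ∑ k ∈ Finset.Icc 1 M, X k * pderiv k f := by
  have hsub : f.vars ⊆ Finset.range (M + 1) := fun i hi =>
    Finset.mem_range.mpr (Nat.lt_succ_of_le (hM i hi))
  have h0 : degOp f = ∑ k ∈ Finset.range (M + 1), X k * pderiv k f := by
    rw [degOp]
    exact Finset.sum_subset hsub (fun k _ hk => by
      rw [pderiv_eq_zero_of_notMem_vars hk, mul_zero])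
  rw [h0, Finset.sum_range_succ']
  have hIcc : ∑ k ∈ Finset.Icc 1 M, X k * pderiv k f
      = ∑ j ∈ Finset.range M, X (j + 1) * pderiv (j + 1) f := by
    rw [← Finset.Ico_add_one_right_eq_Icc, Finset.sum_Ico_eq_sum_range]
    have hc : M + 1 - 1 = M := by omega
    rw [hc]
    exact Finset.sum_congr rfl fun j _ => by rw [Nat.add_comm 1 j]
  rw [hIcc]
  ring

/-- Key decomposition identity for the continuous homotopy operator:
`X₀ · (L⁰ f) = M f − D_x (I f)` for `f` of order at most `M`. -/
theorem homotopy_decomposition (M : ℕ) (f : MvPolynomial ℕ ℝ)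
    (hM : ∀ i ∈ f.vars, i ≤ M) :
    X 0 * Euler f = degOp f - Dx (integrand M f) := by
  have hI : integrand M f = ∑ i ∈ Finset.range M, X i * Sfun M f i := by
    simp only [integrand]
    exact Finset.sum_congr rfl fun i _ => by rw [Icc_sum_eq]
  have hDxI : Dx (integrand M f)
      = X 0 * Dx (Sfun M f 0) + ∑ k ∈ Finset.Icc 1 M, X k * pderiv k f := by
    rw [hI, Dx_sum]
    have hterm : ∀ i ∈ Finset.range M,
        Dx (X i * Sfun M f i) = X (i + 1) * Sfun M f i + X i * Dx (Sfun M f i) :=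
      fun i _ => by rw [Dx_mul, Dx_X]
    rw [Finset.sum_congr rfl hterm, telescope M f M le_rfl, Sfun_top, Dx_zero,
      mul_zero, sub_zero]
  rw [Euler_eq M f hM, degOp_eq M f hM, hDxI]
  ring
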